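/- Let x = (x⁽¹⁾, …, x⁽ⁿ⁾) be a point of the fiber product L⁽¹⁾ ×_M ⋯ ×_M L⁽ⁿ⁾ of polytopes in standard form, and for each i set A_i := f_i(Vsupp(x⁽ⁱ⁾)). Suppose that for every i the map f_i is injective on Vsupp(x⁽ⁱ⁾) and the set A_i is affinely independent, and that the intersection ⋂_{i=1}^n Conv(A_i) consists of a single point. Then x is an extreme point of the fiber product. -/

import Mathlib

/-- The support of a vector: the set of indices with nonzero coordinate. -/
def supp {d : ℕ} (x : Fin d → ℝ) : Set (Fin d) := {i | x i ≠ 0}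

/-- A polytope in standard form: a bounded intersection of an affine subspace
(given by linear equations `A x = b`) with the nonnegative orthant. -/
def StdForm {d : ℕ} (L : Set (Fin d → ℝ)) : Prop :=
  Bornology.IsBounded L ∧
    ∃ (k : ℕ) (A : Matrix (Fin k) (Fin d) ℝ) (b : Fin k → ℝ),
      L = {x | A.mulVec x = b ∧ ∀ i, 0 ≤ x i}

/-- A (general) polytope: a bounded intersection of finitely many closed half-spaces. -/
def IsPolytope {d : ℕ} (M : Set (Fin d → ℝ)) : Prop :=
  Bornology.IsBounded M ∧
    ∃ (k : ℕ) (A : Matrix (Fin k) (Fin d) ℝ) (b : Fin k → ℝ),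
      M = {x | ∀ i, A.mulVec x i ≤ b i}

/-- The vertex support of `x` in `L`: the set of extreme points (vertices) of `L`
whose support is contained in the support of `x`. -/
def Vsupp {d : ℕ} (L : Set (Fin d → ℝ)) (x : Fin d → ℝ) : Set (Fin d → ℝ) :=
  {y ∈ Set.extremePoints ℝ L | supp y ⊆ supp x}

/-- The fiber product `L⁽¹⁾ ×_M ⋯ ×_M L⁽ⁿ⁾` of the polytopes `L i` over the affine
maps `f i`: tuples that are componentwise in the `L i` and whose images under the
`f i` all agree. -/
def FiberProd {n e : ℕ} (d : Fin n → ℕ) (L : ∀ i, Set (Fin (d i) → ℝ))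
    (f : ∀ i, (Fin (d i) → ℝ) →ᵃ[ℝ] (Fin e → ℝ)) : Set (∀ i, Fin (d i) → ℝ) :=
  {x | (∀ i, x i ∈ L i) ∧ ∀ i j, f i (x i) = f j (x j)}

/-!
Let `x` lie in the open segment between `y` and `z` in the fiber product. Since all points
are nonnegative, `supp y⁽ⁱ⁾ ⊆ supp x⁽ⁱ⁾`, so `y⁽ⁱ⁾` lies in the face of `L⁽ⁱ⁾` cut out by
the support of `x⁽ⁱ⁾`; by Krein–Milman this face is `Conv (Vsupp x⁽ⁱ⁾)`. Hence the common
value `fᵢ(y⁽ⁱ⁾)` lies in `⋂ Conv Aᵢ`, so it is the unique point there, which is also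
`fᵢ(x⁽ⁱ⁾)`. Finally `fᵢ` is injective on `Conv (Vsupp x⁽ⁱ⁾)`, because it maps these vertices
injectively onto the affinely independent set `Aᵢ`; so `y = x`.
-/

open Set

section SupportFace

variable {d : ℕ}

lemma supp_subset_iff {w x : Fin d → ℝ} : supp w ⊆ supp x ↔ ∀ j, x j = 0 → w j = 0 :=
  forall_congr' fun _ => not_imp_not

def suppFace (L : Set (Fin d → ℝ)) (x : Fin d → ℝ) : Set (Fin d → ℝ) :=
  {w ∈ L | supp w ⊆ supp x}

lemma mem_suppFace_self {L : Set (Fin d → ℝ)} {x : Fin d → ℝ} (hx : x ∈ L) :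
    x ∈ suppFace L x :=
  ⟨hx, subset_rfl⟩

lemma suppFace_eq_inter (L : Set (Fin d → ℝ)) (x : Fin d → ℝ) :
    suppFace L x = L ∩ ⋂ j, ⋂ (_ : x j = 0), {w | w j = 0} := by
  ext w
  simp [suppFace, supp_subset_iff]

lemma IsClosed.suppFace {L : Set (Fin d → ℝ)} (hL : IsClosed L) (x : Fin d → ℝ) :
    IsClosed (suppFace L x) := by
  rw [suppFace_eq_inter]
  exact hL.inter <| isClosed_iInter fun j => isClosed_iInter fun _ =>
    isClosed_eq (continuous_apply j) continuous_const

lemma Convex.suppFace {L : Set (Fin d → ℝ)} (hL : Convex ℝ L) (x : Fin d → ℝ) :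
    Convex ℝ (suppFace L x) := by
  rw [suppFace_eq_inter]
  refine hL.inter <| convex_iInter fun j => convex_iInter fun _ => ?_
  exact convex_hyperplane (LinearMap.proj (R := ℝ) (φ := fun _ : Fin d => ℝ) j).isLinear 0

lemma isExtreme_suppFace {L : Set (Fin d → ℝ)} (hL : ∀ w ∈ L, ∀ j, 0 ≤ w j)
    (x : Fin d → ℝ) : IsExtreme ℝ L (suppFace L x) := by
  refine ⟨sep_subset _ _, fun y hy z hz w hw hseg => ⟨hy, supp_subset_iff.2 fun j hj => ?_⟩⟩
  obtain ⟨a, b, ha, hb, -, rfl⟩ := hseg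
  have hwj : a * y j + b * z j = 0 := by simpa using supp_subset_iff.1 hw.2 j hj
  nlinarith [hL y hy j, hL z hz j]

lemma extremePoints_suppFace {L : Set (Fin d → ℝ)} (hL : ∀ w ∈ L, ∀ j, 0 ≤ w j)
    (x : Fin d → ℝ) : (suppFace L x).extremePoints ℝ = Vsupp L x := by
  rw [(isExtreme_suppFace hL x).extremePoints_eq]
  ext w
  simp only [suppFace, Vsupp, mem_inter_iff, mem_sep_iff]
  exact ⟨fun h => ⟨h.2, h.1.2⟩, fun h => ⟨⟨extremePoints_subset h.1, h.2⟩, h.1⟩⟩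

lemma suppFace_subset_convexHull_Vsupp {L : Set (Fin d → ℝ)} (hLc : IsCompact L)
    (hLconv : Convex ℝ L) (hL : ∀ w ∈ L, ∀ j, 0 ≤ w j) {x : Fin d → ℝ}
    (hfin : (Vsupp L x).Finite) : suppFace L x ⊆ convexHull ℝ (Vsupp L x) := by
  have hcomp : IsCompact (suppFace L x) :=
    hLc.of_isClosed_subset (hLc.isClosed.suppFace x) (sep_subset _ _)
  have hKM := closure_convexHull_extremePoints hcomp (hLconv.suppFace x)
  rw [extremePoints_suppFace hL, (hfin.isCompact_convexHull (𝕜 := ℝ)).isClosed.closure_eq] at hKM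
  exact hKM.ge

end SupportFace

section StdForm

variable {d : ℕ} {L : Set (Fin d → ℝ)}

lemma StdForm.exists_eq_preimage_inter_Ici (hL : StdForm L) :
    ∃ (k : ℕ) (A : Matrix (Fin k) (Fin d) ℝ) (b : Fin k → ℝ),
      L = A.mulVecLin ⁻¹' {b} ∩ Ici 0 := by
  obtain ⟨-, k, A, b, rfl⟩ := hL
  exact ⟨k, A, b, by ext; simp [Pi.le_def]⟩

lemma StdForm.nonneg (hL : StdForm L) : ∀ w ∈ L, ∀ j, 0 ≤ w j := by
  obtain ⟨k, A, b, rfl⟩ := hL.exists_eq_preimage_inter_Ici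
  exact fun w hw => hw.2

lemma StdForm.convex (hL : StdForm L) : Convex ℝ L := by
  obtain ⟨k, A, b, rfl⟩ := hL.exists_eq_preimage_inter_Ici
  exact ((convex_singleton b).linear_preimage _).inter (convex_Ici 0)

lemma StdForm.isCompact (hL : StdForm L) : IsCompact L := by
  refine Metric.isCompact_of_isClosed_isBounded ?_ hL.1
  obtain ⟨k, A, b, rfl⟩ := hL.exists_eq_preimage_inter_Ici
  exact (isClosed_singleton.preimage A.mulVecLin.continuous_of_finiteDimensional).inter
    isClosed_Ici

end StdForm

lemma Set.InjOn.convexHull_of_affineIndependent_image {E F : Type*} [AddCommGroup E]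
    [Module ℝ E] [AddCommGroup F] [Module ℝ F] {f : E →ᵃ[ℝ] F} {s : Set E}
    (hinj : InjOn f s) (haff : AffineIndependent ℝ ((↑) : (f '' s) → F)) :
    InjOn f (convexHull ℝ s) := by
  classical
  have hai : AffineIndependent ℝ (f ∘ ((↑) : s → E)) :=
    (haff.comp_embedding ⟨fun v : s => ⟨f v, mem_image_of_mem f v.2⟩,
      fun a b hab => Subtype.ext (hinj a.2 b.2 (congrArg Subtype.val hab))⟩ :)
  intro p hp q hq hpq
  rw [← Subtype.range_coe (s := s), convexHull_range_eq_exists_affineCombination] at hp hq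
  obtain ⟨t, w, -, hw, rfl⟩ := hp
  obtain ⟨t', w', -, hw', rfl⟩ := hq
  rw [Finset.map_affineCombination t _ w hw f, Finset.map_affineCombination t' _ w' hw' f] at hpq
  rw [Finset.affineCombination_indicator_subset w _ Finset.subset_union_left,
    Finset.affineCombination_indicator_subset w' _ Finset.subset_union_right,
    hai.indicator_eq_of_affineCombination_eq t t' w w' hw hw' hpq]

section FiberProd

variable {n e : ℕ} {d : Fin n → ℕ} {L : ∀ i, Set (Fin (d i) → ℝ)}
  {f : ∀ i, (Fin (d i) → ℝ) →ᵃ[ℝ] (Fin e → ℝ)} {S : ∀ i, Set (Fin (d i) → ℝ)}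

lemma FiberProd.apply_mem_iInter_convexHull_image {y : ∀ i, Fin (d i) → ℝ}
    (hy : y ∈ FiberProd d L f) (hyS : ∀ i, y i ∈ convexHull ℝ (S i)) (i : Fin n) :
    f i (y i) ∈ ⋂ j, convexHull ℝ (f j '' S j) :=
  mem_iInter.2 fun j => hy.2 i j ▸ (f j).image_convexHull (S j) ▸ mem_image_of_mem _ (hyS j)

lemma FiberProd.eq_of_forall_mem_convexHull
    (hinj : ∀ i, InjOn (f i) (convexHull ℝ (S i)))
    (hS : (⋂ i, convexHull ℝ (f i '' S i)).Subsingleton) {y z : ∀ i, Fin (d i) → ℝ}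
    (hy : y ∈ FiberProd d L f) (hz : z ∈ FiberProd d L f)
    (hyS : ∀ i, y i ∈ convexHull ℝ (S i)) (hzS : ∀ i, z i ∈ convexHull ℝ (S i)) : y = z :=
  funext fun i => hinj i (hyS i) (hzS i) <|
    hS (apply_mem_iInter_convexHull_image hy hyS i) (apply_mem_iInter_convexHull_image hz hzS i)

end FiberProd

theorem stmt_7_general {n e : ℕ} (d : Fin n → ℕ)
    (L : ∀ i, Set (Fin (d i) → ℝ)) (hL : ∀ i, StdForm (L i))
    (f : ∀ i, (Fin (d i) → ℝ) →ᵃ[ℝ] (Fin e → ℝ))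
    (x : ∀ i, Fin (d i) → ℝ) (hx : x ∈ FiberProd d L f)
    (hinj : ∀ i, Set.InjOn (f i) (Vsupp (L i) (x i)))
    (haff : ∀ i, AffineIndependent ℝ
      ((↑) : (f i '' Vsupp (L i) (x i)) → (Fin e → ℝ)))
    (hint : ∃ u, (⋂ i, convexHull ℝ (f i '' Vsupp (L i) (x i))) = {u}) :
    x ∈ Set.extremePoints ℝ (FiberProd d L f) := by
  obtain ⟨u, hu⟩ := hint
  have hface : ∀ i, suppFace (L i) (x i) ⊆ convexHull ℝ (Vsupp (L i) (x i)) := fun i =>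
    suppFace_subset_convexHull_Vsupp (hL i).isCompact (hL i).convex (hL i).nonneg
      ((finite_set_of_fin_dim_affineIndependent ℝ (haff i)).of_finite_image (hinj i))
  refine ⟨hx, fun y hy z hz hxyz => ?_⟩
  have hyx : ∀ i, y i ∈ suppFace (L i) (x i) := fun i =>
    (isExtreme_suppFace (hL i).nonneg (x i)).left_mem_of_mem_openSegment (hy.1 i) (hz.1 i)
      (mem_suppFace_self (hx.1 i)) (Pi.openSegment_subset (s := univ) y z hxyz i (mem_univ i))
  exact FiberProd.eq_of_forall_mem_convexHull
    (fun i => (hinj i).convexHull_of_affineIndependent_image (haff i))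
    (hu ▸ subsingleton_singleton) hy hx (fun i => hface i (hyx i))
    (fun i => hface i (mem_suppFace_self (hx.1 i)))

theorem stmt_7 {n e : ℕ} (d : Fin n → ℕ)
    (L : ∀ i, Set (Fin (d i) → ℝ)) (hL : ∀ i, StdForm (L i))
    (M : Set (Fin e → ℝ)) (hM : IsPolytope M)
    (f : ∀ i, (Fin (d i) → ℝ) →ᵃ[ℝ] (Fin e → ℝ))
    (hf : ∀ i, ∀ y ∈ L i, f i y ∈ M)
    (x : ∀ i, Fin (d i) → ℝ) (hx : x ∈ FiberProd d L f)
    (hinj : ∀ i, Set.InjOn (f i) (Vsupp (L i) (x i)))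
    (haff : ∀ i, AffineIndependent ℝ
      ((↑) : (f i '' Vsupp (L i) (x i)) → (Fin e → ℝ)))
    (hint : ∃ u, (⋂ i, convexHull ℝ (f i '' Vsupp (L i) (x i))) = {u}) :
    x ∈ Set.extremePoints ℝ (FiberProd d L f) :=
  stmt_7_general d L hL f x hx hinj haff hint
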